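/- For all ordinals α < ε₀ and all integers n ≥ 1, m(α, n+1) ≥ H_α(n). -/

import Mathlib

/-! ## Basic Laver patterns (raw data) -/

/-- `negGet l k` is the `k`-th entry of `l` counted from the end (1-indexed),
    i.e. `l_{-k}` in the paper's notation. -/
def negGet (l : List ℕ) (k : ℕ) : ℕ := l.getD (l.length - k) 0

/-- Raw data of a basic Laver pattern: a list of rows and a list of step lengths. -/
structure Blp where
  rows : List (List ℕ)
  steps : List ℕ

namespace Blp

/-- The length (number of rows) of the pattern. -/
def n (p : Blp) : ℕ := p.rows.length

/-- The `i`-th row (1-indexed). -/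
def rowOf (p : Blp) (i : ℕ) : List ℕ := p.rows.getD (i - 1) []

/-- The step length of row `i` (1-indexed). -/
def stepOf (p : Blp) (i : ℕ) : ℕ := p.steps.getD (i - 1) 0

def lastRow (p : Blp) : List ℕ := p.rows.getLastD []

def lastStep (p : Blp) : ℕ := p.steps.getLastD 0

/-- `p` is a basic Laver pattern (blp). -/
def IsValid (p : Blp) : Prop :=
  2 ≤ p.n ∧ p.steps.length = p.n ∧
  p.rowOf 1 = [0, 1, 2] ∧ p.rowOf 2 = [0, 1, 2, 3] ∧
  ∀ i, 1 ≤ i → i ≤ p.n →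
    List.Chain' (· < ·) (p.rowOf i) ∧
    3 ≤ (p.rowOf i).length ∧
    negGet (p.rowOf i) 2 = i ∧ negGet (p.rowOf i) 1 = i + 1 ∧
    (Odd (p.rowOf i).length → p.stepOf i = ((p.rowOf i).length - 1) / 2) ∧
    ((p.rowOf i).length = 4 → p.stepOf i = 1) ∧
    (Even (p.rowOf i).length → 4 < (p.rowOf i).length →
      p.stepOf i = (p.rowOf i).length / 2 ∨ p.stepOf i = (p.rowOf i).length / 2 - 1)

/-- Delete the last row. -/
def del (p : Blp) : Blp := ⟨p.rows.dropLast, p.steps.dropLast⟩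

end Blp

/-- The partial map `ap(s,t,ℓ)` is defined. -/
def ApDefined (s t : List ℕ) (ℓ : ℕ) : Prop :=
  0 < negGet t (ℓ + 2) ∧ ℓ + 2 ≤ t.length ∧
  (∀ x ∈ s, x ≤ negGet t (ℓ + 1)) ∧
  (∀ x ∈ s, t.headD 0 ≤ x → x < negGet t (ℓ + 2) → x ∈ t)

/-- The effect of `ap(·,t,ℓ)` on a single entry. -/
def apEntry (t : List ℕ) (ℓ x : ℕ) : ℕ :=
  if x < t.headD 0 then x
  else if x < negGet t (ℓ + 2) then t.getD (t.idxOf x + ℓ) 0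
  else negGet t 2 + x - negGet t (ℓ + 2)

/-- The sequence `ap(s,t,ℓ)` (total function; meaningful when `ApDefined s t ℓ`). -/
def apF (s t : List ℕ) (ℓ : ℕ) : List ℕ := s.map (apEntry t ℓ)

namespace Blp

/-- `a = s_{n,-ℓ_n-2}` in the definition of the copying operation. -/
def copyA (p : Blp) : ℕ := negGet p.lastRow (p.lastStep + 2)

/-- `b = s_{n,-ℓ_n-1} - 1` in the definition of the copying operation. -/
def copyB (p : Blp) : ℕ := negGet p.lastRow (p.lastStep + 1) - 1

/-- `p` is copyable. -/
def Copyable (p : Blp) : Prop :=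
  3 ≤ p.n ∧
  ∀ i ≤ p.copyB - p.copyA, ApDefined (p.rowOf (p.copyA + i)) p.lastRow p.lastStep

/-- `p.Copied` (meaningful when `p` is copyable). -/
def Copied (p : Blp) : Blp :=
  ⟨p.rows.dropLast ++
     (List.range (p.copyB - p.copyA + 1)).map
       (fun i => apF (p.rowOf (p.copyA + i)) p.lastRow p.lastStep),
   p.steps.dropLast ++
     (List.range (p.copyB - p.copyA + 1)).map (fun i => p.stepOf (p.copyA + i))⟩

/-- The zero blp is the unique blp of length 2. -/
def IsZero (p : Blp) : Prop := p.n = 2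

/-- `p` is of successor type. -/
def IsSuccType (p : Blp) : Prop := p.lastRow.take 3 = [0, 1, 2] ∧ p.lastRow.length = 5

/-- `p` is of limit type. -/
def IsLimitType (p : Blp) : Prop :=
  p.lastRow.take 3 = [0, 1, 2] ∧ p.lastRow.length = 6 ∧ p.lastStep = 3

/-- Append the auxiliary row `(a, n'+1, n'+2)` (with step length 1) to `q`. -/
def eExtend (q : Blp) (a : ℕ) : Blp :=
  ⟨q.rows ++ [[a, q.n + 1, q.n + 2]], q.steps ++ [1]⟩

/-- The operation `p.E(m)` for `p` of limit or successor type. -/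
def Eop (p : Blp) : ℕ → Blp
  | 0 => p.del
  | m + 1 => (eExtend (p.Eop m) (negGet p.lastRow 3)).Copied

end Blp

/-- Row `i + r` in the completion operation `comp(p,i,T)`:
insert `t_1, …, t_{r+1}` after position `ℓ` of `s` and replace the last entry by
`i+1, …, i+r+1`. -/
def compRow (s : List ℕ) (ℓ i r : ℕ) (T : List ℕ) : List ℕ :=
  (s.take ℓ ++ T.take (r + 1) ++ s.drop ℓ).dropLast ++
    (List.range (r + 1)).map (fun j => i + 1 + j)

namespace Blp

/-- The completion operation `comp(p,i,T)`. -/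
def comp (p : Blp) (i : ℕ) (T : List ℕ) : Blp :=
  ⟨p.rows.take (i - 1) ++
     (List.range (T.length + 1)).map (fun r => compRow (p.rowOf i) (p.stepOf i) i r T) ++
     (p.rows.drop i).map (List.map (fun x => if i < x then x + T.length else x)),
   p.steps.take (i - 1) ++
     ((List.range T.length).map (fun r => p.stepOf i + r + 1) ++ [p.stepOf i + T.length]) ++
     p.steps.drop i⟩

/-- The (descending) chain `x_1, x_2, …` with `x_{r+1} = s_{x_r,-3}`, stopping
as soon as the value is `≤ lo` (that final value is not collected). -/
def descChain (p : Blp) (lo : ℕ) : ℕ → ℕ → List ℕ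
  | 0, _ => []
  | fuel + 1, x =>
    let nx := negGet (p.rowOf x) 3
    if nx ≤ lo then [] else nx :: p.descChain lo fuel nx

/-- `fullcomp(p,i)` for a suitable row `i`. -/
def fullcomp (p : Blp) (i : ℕ) : Blp :=
  p.comp i
    ((p.descChain ((p.rowOf i).getD (p.stepOf i - 1) 0)
        ((p.rowOf i).getD (p.stepOf i) 0 + 1) ((p.rowOf i).getD (p.stepOf i) 0)).reverse)

/-- The (increasing) list of indices of suitable rows (rows of odd length `≥ 5`). -/
def suitableIdx (p : Blp) : List ℕ :=
  (List.range p.n).filterMap fun j =>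
    if 5 ≤ (p.rowOf (j + 1)).length ∧ (p.rowOf (j + 1)).length % 2 = 1 then some (j + 1)
    else none

/-- The modification operation `p.M`: apply `fullcomp` to `p.Copied` at the suitable
indices of `p`, in decreasing order. -/
def Mop (p : Blp) : Blp := p.suitableIdx.reverse.foldl (fun q i => q.fullcomp i) p.Copied

end Blp

/- The graph of the partial recursive function `f(p,m)` of the paper
(`FRel p m r` means `f(p,m)` is defined with value `r`), together with the graph
`FIter q k x r` of the `k`-fold iterate of `x ↦ f(q,x)` at `x`. -/
mutual
  inductive FRel : Blp → ℕ → ℕ → Prop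
    | zero (p : Blp) (m : ℕ) : p.IsZero → FRel p m (m * 2 ^ m)
    | notCopyable (p : Blp) (m r : ℕ) :
        ¬p.IsZero → ¬p.Copyable → FRel p.del m r → FRel p m r
    | succ (p : Blp) (m r : ℕ) :
        ¬p.IsZero → p.Copyable → p.IsSuccType → FIter p.del (2 ^ m) m r → FRel p m r
    | limit (p : Blp) (m r : ℕ) :
        ¬p.IsZero → p.Copyable → ¬p.IsSuccType → p.IsLimitType →
        FRel (p.Eop m) m r → FRel p m r
    | trans (p : Blp) (m r : ℕ) :
        ¬p.IsZero → p.Copyable → ¬p.IsSuccType → ¬p.IsLimitType →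
        FRel p.Mop m r → FRel p m r
  inductive FIter : Blp → ℕ → ℕ → ℕ → Prop
    | base (q : Blp) (x : ℕ) : FIter q 0 x x
    | step (q : Blp) (k x y r : ℕ) : FIter q k x y → FRel q y r → FIter q (k + 1) x r
end

/-! ## Ordinals below ε₀ via `ONote`, fundamental sequences, pattern sequences -/

/-- `o` denotes a successor ordinal (for `o` in normal form). -/
def isSuccO : ONote → Bool
  | .zero => false
  | .oadd e _ .zero => decide (e = ONote.zero)
  | .oadd _ _ (.oadd e' c' a') => isSuccO (.oadd e' c' a')

/-- The predecessor of a (successor) ordinal notation. -/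
def predO : ONote → ONote
  | .zero => .zero
  | .oadd e c .zero => if e = ONote.zero then ONote.ofNat ((c : ℕ) - 1) else .oadd e c .zero
  | .oadd e c (.oadd e' c' a') => .oadd e c (predO (.oadd e' c' a'))

/-- The canonical fundamental sequence: `fsO o k` is `o[k]` (meaningful for `o` in
normal form denoting a limit ordinal), obtained from the unique decomposition
`o = β + ω^γ` via `(ω^(δ+1))[k] = ω^δ·k` and `(ω^γ)[k] = ω^(γ[k])` for `γ` limit. -/
def fsO : ONote → ℕ → ONote
  | .zero, _ => .zero
  | .oadd e c (.oadd e' c' a'), k => .oadd e c (fsO (.oadd e' c' a') k)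
  | .oadd e c .zero, k =>
    let t : ONote :=
      if e = ONote.zero then .zero
      else if isSuccO e then
        (if h : k = 0 then .zero else .oadd (predO e) ⟨k, Nat.pos_of_ne_zero h⟩ .zero)
      else .oadd (fsO e k) 1 .zero
    if c = 1 then t else .oadd e (c - 1) t

/-- Auxiliary for the pattern sequence: process the Cantor normal form terms of `o`
from the left, starting from the already-computed list `L`. -/
def psFrom : List ℕ → ONote → List ℕ
  | L, .zero => L
  | L, .oadd e c a =>
    let pe := psFrom [] e
    let step : List ℕ → List ℕ := fun M =>
      if e = ONote.zero then M ++ [0]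
      else M ++ [0] ++ pe.map (· + (M.length + 1)) ++ [M.length + 1]
    psFrom (step^[(c : ℕ)] L) a

/-- The pattern sequence `ps(α)` of an ordinal `α < ε₀`. -/
def psO (o : ONote) : List ℕ := psFrom [] o

/-- The fundamental sequence for `ε₀` itself: `ε₀[0] = 1`, `ε₀[n+1] = ω^(ε₀[n])`. -/
def eps0fs : ℕ → ONote
  | 0 => 1
  | k + 1 => .oadd (eps0fs k) 1 .zero

/-- The graph of the Hardy hierarchy `H_α(n)` for `α < ε₀`:
`HardyRel o n r` means `H_{repr o}(n) = r`. -/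
inductive HardyRel : ONote → ℕ → ℕ → Prop
  | zero (n : ℕ) : HardyRel 0 n n
  | succ (o : ONote) (n r : ℕ) : HardyRel o (n + 1) r → HardyRel (o + 1) n r
  | limit (o : ONote) (n r : ℕ) :
      Order.IsSuccLimit (ONote.repr o) → HardyRel (fsO o n) (n + 1) r → HardyRel o n r

/- The graph of the `m`-hierarchy `m(α,n)` for `α < ε₀` (`MRel o n r` means
`m(repr o, n) = r`), together with the graph `MIter o k x r` of the `k`-fold
iterate of `x ↦ m(repr o, x)` at `x`. -/
mutual
  inductive MRel : ONote → ℕ → ℕ → Prop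
    | zero (n : ℕ) : MRel 0 n (n ^ n)
    | succ (o : ONote) (n r : ℕ) : MIter o n n r → MRel (o + 1) n r
    | limit (o : ONote) (n r : ℕ) :
        Order.IsSuccLimit (ONote.repr o) → MRel (fsO o n) n r → MRel o n r
  inductive MIter : ONote → ℕ → ℕ → ℕ → Prop
    | base (o : ONote) (x : ℕ) : MIter o 0 x x
    | step (o : ONote) (k x y r : ℕ) : MIter o k x y → MRel o y r → MIter o (k + 1) x r
end

/-! ## The specific patterns `q_n`, `p_α` -/

/-- The blp `q_n` with `2^n + 4` rows. -/
def qBlp (n : ℕ) : Blp :=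
  ⟨[[0, 1, 2], [0, 1, 2, 3], [0, 1, 2, 3, 4]] ++
     (List.range (2 ^ n + 1)).map (fun j => [0, 1, 2, j + 3, j + 4, j + 5]),
   [1, 1, 2] ++ List.replicate (2 ^ n + 1) 3⟩

/-- The Steinhaus–Moser functions `m_k` for finite `k`. -/
def mSMfin : ℕ → ℕ → ℕ
  | 0, n => n ^ n
  | k + 1, n => (mSMfin k)^[n] n

/-- The Steinhaus–Moser functions `m_{ω+k}`; `mSMomega 0 = m_ω` with `m_ω(n) = m_n(n)`. -/
def mSMomega : ℕ → ℕ → ℕ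
  | 0, n => mSMfin n n
  | k + 1, n => (mSMomega k)^[n] n

/-- The canonical blps `p_k` for finite `k`. -/
def pFin : ℕ → Blp
  | 0 => ⟨[[0, 1, 2], [0, 1, 2, 3]], [1, 1]⟩
  | k + 1 =>
    ⟨(pFin k).rows ++ [[0, 1, 2, (pFin k).n + 1, (pFin k).n + 2]], (pFin k).steps ++ [2]⟩

/-- The canonical blps `p_{ω+k}`. -/
def pOmegaBlp : ℕ → Blp
  | 0 => ⟨[[0, 1, 2], [0, 1, 2, 3], [0, 1, 2, 3, 4], [0, 1, 2, 3, 4, 5]], [1, 1, 2, 3]⟩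
  | k + 1 =>
    ⟨(pOmegaBlp k).rows ++ [[0, 1, 2, (pOmegaBlp k).n + 1, (pOmegaBlp k).n + 2]],
     (pOmegaBlp k).steps ++ [2]⟩

/-- The canonical blps `p_α` for `α < ω + ω`, with `Sum.inl k ↦ p_k` and
`Sum.inr k ↦ p_{ω+k}`. -/
def pSM : ℕ ⊕ ℕ → Blp
  | .inl k => pFin k
  | .inr k => pOmegaBlp k

/-- The Steinhaus–Moser functions `m_α` for `α < ω + ω`, with `Sum.inl k ↦ m_k` and
`Sum.inr k ↦ m_{ω+k}`. -/
def mSM : ℕ ⊕ ℕ → ℕ → ℕ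
  | .inl k => mSMfin k
  | .inr k => mSMomega k

/-- The canonical blp `p_α` for `α < ε₀`, built from the pattern sequence `ps(α)`. -/
def pOf (o : ONote) : Blp :=
  ⟨[[0, 1, 2], [0, 1, 2, 3]] ++
     (List.range (psO o).length).map (fun j =>
       if (psO o).getD j 0 = 0 then [0, 1, 2, j + 3, j + 4]
       else [0, 1, 2, (psO o).getD j 0 + 2, j + 3, j + 4]),
   [1, 1] ++ (psO o).map (fun t => if t = 0 then 2 else 3)⟩

/-! ## Knuth arrows and Graham's number -/

/-- Knuth's up-arrow: `knuth m a b = a ↑^m b` (with `↑^0` multiplication and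
`↑^1` exponentiation). -/
def knuth : ℕ → ℕ → ℕ → ℕ
  | 0, a, b => a * b
  | 1, a, b => a ^ b
  | _ + 2, _, 0 => 1
  | m + 2, a, b + 1 => knuth (m + 1) a (knuth (m + 2) a b)
  termination_by m _ b => (m, b)

/-- `grahamSeq k = g_{k+1}`: `g_1 = 3↑↑↑↑3`, `g_{k+1} = 3 ↑^{g_k} 3`. -/
def grahamSeq : ℕ → ℕ
  | 0 => knuth 4 3 3
  | k + 1 => knuth (grahamSeq k) 3 3

/-- Graham's number `G = g_64`. -/
def grahamNumber : ℕ := grahamSeq 63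

lemma repr_oadd' (e : ONote) (c : ℕ+) (a : ONote) :
    ONote.repr (.oadd e c a) = Ordinal.omega0 ^ e.repr * c + a.repr := rfl

theorem predO_nfBelow : ∀ {o : ONote} {b : Ordinal}, ONote.NFBelow o b → ONote.NFBelow (predO o) b
  | .zero, _, h => h
  | .oadd e c .zero, b, h => by
    rw [predO]
    split
    · exact (ONote.nfBelow_ofNat _).mono (Order.one_le_iff_pos.2 (lt_of_le_of_lt zero_le h.lt))
    · exact h
  | .oadd e c (.oadd e' c' a'), b, h => by
    rw [predO]
    exact ONote.NFBelow.oadd h.fst (predO_nfBelow h.snd) h.lt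

theorem predO_nf {o : ONote} (h : o.NF) : (predO o).NF := by
  rcases h with ⟨b, hb⟩; exact ⟨b, predO_nfBelow hb⟩

theorem repr_predO : ∀ {o : ONote}, o.NF → isSuccO o = true →
    ONote.repr o = ONote.repr (predO o) + 1
  | .oadd e c .zero, h, hs => by
    have he : e = 0 := by simpa [isSuccO] using hs
    subst he
    rw [predO, if_pos ONote.zero_def.symm, ONote.repr_ofNat, repr_oadd']
    have h2 : ((c:ℕ) - 1) + 1 = (c:ℕ) := Nat.succ_pred_eq_of_pos c.pos
    conv_lhs => rw [← h2]
    simp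
  | .oadd e c (.oadd e' c' a'), h, hs => by
    have hs' : isSuccO (ONote.oadd e' c' a') = true := by simpa [isSuccO] using hs
    rw [predO]
    show Ordinal.omega0 ^ e.repr * c + (ONote.oadd e' c' a').repr =
      Ordinal.omega0 ^ e.repr * c + (predO (ONote.oadd e' c' a')).repr + 1
    rw [repr_predO h.snd hs', add_assoc]

theorem repr_predO_lt {o : ONote} (h : o.NF) (hs : isSuccO o = true) :
    ONote.repr (predO o) < ONote.repr o := by
  rw [repr_predO h hs]; exact lt_add_one _
lemma oadd_ne_zero' (e : ONote) (c : ℕ+) (a : ONote) : ONote.oadd e c a ≠ 0 := fun h => by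
  rw [← ONote.zero_def] at h; exact ONote.noConfusion h

theorem repr_fsO_lt (k : ℕ) : ∀ {o : ONote}, o.NF → o ≠ 0 →
    ONote.repr (fsO o k) < ONote.repr o
  | .zero, _, h0 => absurd rfl h0
  | .oadd e c (.oadd e' c' a'), h, _ => by
    rw [fsO, repr_oadd', repr_oadd']
    exact (add_lt_add_iff_left _).2 (repr_fsO_lt k ⟨_, h.snd'⟩ (oadd_ne_zero' _ _ _))
  | .oadd e c .zero, h, _ => by
    rw [fsO]
    have hrt : ∀ ht : ONote, ht.repr < Ordinal.omega0 ^ e.repr →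
        (if c = 1 then ht else ONote.oadd e (c - 1) ht).repr < ONote.repr (.oadd e c .zero) := by
      intro ht hlt
      rw [repr_oadd']
      split
      · subst_vars
        calc ht.repr < Ordinal.omega0 ^ e.repr := hlt
        _ ≤ _ := by simpa using Ordinal.le_add_right _ _
      · rename_i hc1
        rw [repr_oadd']
        have hcc : ((c - 1 : ℕ+) : ℕ) = (c : ℕ) - 1 := by
          rw [PNat.sub_coe, if_pos (lt_of_le_of_ne c.one_le (fun hh => hc1 hh.symm))]
          rfl
        have : Ordinal.omega0 ^ e.repr * ((c - 1 : ℕ+) : ℕ) + Ordinal.omega0 ^ e.repr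
            = Ordinal.omega0 ^ e.repr * (c : ℕ) := by
          rw [hcc, ← mul_add_one]
          congr 1
          have : ((c:ℕ) - 1) + 1 = (c:ℕ) := Nat.succ_pred_eq_of_pos c.pos
          exact_mod_cast congrArg (Nat.cast : ℕ → Ordinal.{0}) this
        calc Ordinal.omega0 ^ e.repr * ((c - 1 : ℕ+) : ℕ) + ht.repr
            < Ordinal.omega0 ^ e.repr * ((c - 1 : ℕ+) : ℕ) + Ordinal.omega0 ^ e.repr :=
              (add_lt_add_iff_left _).2 hlt
        _ = Ordinal.omega0 ^ e.repr * (c : ℕ) := this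
        _ ≤ _ := by simpa using Ordinal.le_add_right _ _
    apply hrt
    split
    · simp [Ordinal.opow_pos _ Ordinal.omega0_pos]
    · split
      · split
        · simp [Ordinal.opow_pos _ Ordinal.omega0_pos]
        · rename_i he hse hk
          erw [repr_oadd']
          have h1 : Ordinal.omega0 ^ (predO e).repr * ((⟨k, Nat.pos_of_ne_zero hk⟩ : ℕ+) : ℕ)
              < Ordinal.omega0 ^ (predO e).repr * Ordinal.omega0 :=
            (mul_lt_mul_iff_right₀ (Ordinal.opow_pos _ Ordinal.omega0_pos)).2
              (Ordinal.nat_lt_omega0 _)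
          rw [ONote.repr]
          calc Ordinal.omega0 ^ (predO e).repr * ((⟨k, Nat.pos_of_ne_zero hk⟩ : ℕ+) : ℕ) + 0
              = Ordinal.omega0 ^ (predO e).repr * ((⟨k, Nat.pos_of_ne_zero hk⟩ : ℕ+) : ℕ) := add_zero _
          _ < Ordinal.omega0 ^ (predO e).repr * Ordinal.omega0 := h1
          _ = Ordinal.omega0 ^ ((predO e).repr + 1) := by
              rw [Ordinal.add_one_eq_succ, Ordinal.opow_succ]
          _ = Ordinal.omega0 ^ e.repr := by rw [← repr_predO h.fst hse]
      · rename_i he hse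
        rw [repr_oadd']
        have h1 : (fsO e k).repr < e.repr := repr_fsO_lt k h.fst he
        calc Ordinal.omega0 ^ (fsO e k).repr * ((1:ℕ+):ℕ) + ONote.repr .zero
            = Ordinal.omega0 ^ (fsO e k).repr := by simp [ONote.repr]
        _ < Ordinal.omega0 ^ e.repr :=
            (Ordinal.opow_lt_opow_iff_right Ordinal.one_lt_omega0).2 h1
theorem fsO_nfBelow (k : ℕ) : ∀ {o : ONote} {b : Ordinal},
    ONote.NFBelow o b → ONote.NFBelow (fsO o k) b
  | .zero, _, h => h
  | .oadd e c (.oadd e' c' a'), b, h => by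
    rw [fsO]
    exact ONote.NFBelow.oadd h.fst (fsO_nfBelow k h.snd) h.lt
  | .oadd e c .zero, b, h => by
    rw [fsO]
    have ht : ∀ ht : ONote, ONote.NFBelow ht e.repr →
        ONote.NFBelow (if c = 1 then ht else ONote.oadd e (c - 1) ht) b := by
      intro ht hb
      split
      · exact hb.mono h.lt.le
      · exact ONote.NFBelow.oadd h.fst hb h.lt
    apply ht
    split
    · exact ONote.NFBelow.zero
    · split
      · split
        · exact ONote.NFBelow.zero
        · rename_i he hse hk
          exact ONote.NFBelow.oadd (predO_nf h.fst) ONote.NFBelow.zero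
            (repr_predO_lt h.fst hse)
      · rename_i he hse
        have hnf : (fsO e k).NF := by
          rcases h.fst with ⟨⟨b', hb'⟩⟩
          exact ⟨b', fsO_nfBelow k hb'⟩
        exact ONote.NFBelow.oadd hnf ONote.NFBelow.zero (repr_fsO_lt k h.fst he)

theorem fsO_nf {o : ONote} (h : o.NF) (k : ℕ) : (fsO o k).NF := by
  rcases h with ⟨b, hb⟩; exact ⟨b, fsO_nfBelow k hb⟩

theorem repr_pos {o : ONote} (h0 : o ≠ 0) : 0 < ONote.repr o := by
  match o with
  | .zero => exact absurd rfl h0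
  | .oadd e c a =>
    calc (0:Ordinal) < Ordinal.omega0 ^ e.repr := Ordinal.opow_pos _ Ordinal.omega0_pos
    _ ≤ _ := ONote.omega0_le_oadd e c a

theorem isLimit_repr : ∀ {o : ONote}, o.NF → o ≠ 0 → isSuccO o = false →
    Order.IsSuccLimit (ONote.repr o)
  | .zero, _, h0, _ => absurd rfl h0
  | .oadd e c (.oadd e' c' a'), h, _, hs => by
    rw [repr_oadd']
    exact Ordinal.isSuccLimit_add _ (isLimit_repr ⟨_, h.snd'⟩ (oadd_ne_zero' _ _ _)
      (by simpa [isSuccO] using hs))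
  | .oadd e c .zero, h, _, hs => by
    have he : e ≠ 0 := by
      intro hh; rw [isSuccO, decide_eq_false_iff_not] at hs; exact hs hh
    rw [repr_oadd']
    have hl : Order.IsSuccLimit (Ordinal.omega0 ^ e.repr) :=
      Ordinal.isSuccLimit_opow_left Ordinal.isSuccLimit_omega0 (repr_pos he).ne'
    have : ((c : ℕ) : Ordinal) = ((c:ℕ) - 1 : ℕ) + 1 := by
      exact_mod_cast (Nat.succ_pred_eq_of_pos c.pos).symm
    rw [ONote.repr, add_zero, this, mul_add_one]
    exact Ordinal.isSuccLimit_add _ hl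
/-- One step of descent: predecessor for successors, `fsO · j` with `j ≤ 1` for limits. -/
def StepO (α β : ONote) : Prop :=
  α ≠ 0 ∧ ((isSuccO α = true ∧ β = predO α) ∨
    (isSuccO α = false ∧ ∃ j ≤ 1, β = fsO α j))

theorem StepO.nf {α β : ONote} (h : α.NF) (s : StepO α β) : β.NF := by
  rcases s with ⟨h0, ⟨_, rfl⟩ | ⟨_, j, _, rfl⟩⟩
  · exact predO_nf h
  · exact fsO_nf h j

theorem StepO.repr_lt {α β : ONote} (h : α.NF) (s : StepO α β) :
    ONote.repr β < ONote.repr α := by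
  rcases s with ⟨h0, ⟨hs, rfl⟩ | ⟨_, j, _, rfl⟩⟩
  · exact repr_predO_lt h hs
  · exact repr_fsO_lt j h h0

theorem chainO_nf {α β : ONote} (h : α.NF) (c : Relation.ReflTransGen StepO α β) : β.NF := by
  induction c with
  | refl => exact h
  | tail _ s ih => exact s.nf ih

theorem nf_repr_ind {P : ONote → Prop}
    (H : ∀ o, o.NF → (∀ o', o'.NF → o'.repr < o.repr → P o') → P o) :
    ∀ o, o.NF → P o := by
  have key : ∀ i : Ordinal, ∀ o : ONote, o.NF → o.repr = i → P o := by
    intro i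
    induction i using Ordinal.induction with
    | h i IH =>
      intro o ho hr
      exact H o ho (fun o' h' hlt => IH _ (hr ▸ hlt) o' h' rfl)
  exact fun o h => key _ o h rfl

theorem chain_to_zero : ∀ o : ONote, o.NF → Relation.ReflTransGen StepO o 0 := by
  refine nf_repr_ind (fun o ho IH => ?_)
  by_cases h0 : o = 0
  · subst h0; exact Relation.ReflTransGen.refl
  · cases hs : isSuccO o with
    | true =>
      exact Relation.ReflTransGen.head ⟨h0, Or.inl ⟨hs, rfl⟩⟩
        (IH _ (predO_nf ho) (repr_predO_lt ho hs))
    | false =>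
      exact Relation.ReflTransGen.head ⟨h0, Or.inr ⟨hs, 0, Nat.zero_le _, rfl⟩⟩
        (IH _ (fsO_nf ho 0) (repr_fsO_lt 0 ho h0))

theorem stepO_oadd_tail {e : ONote} {c : ℕ+} {δ δ' : ONote} (hδ : StepO δ δ') :
    StepO (.oadd e c δ) (.oadd e c δ') := by
  obtain ⟨h0, h⟩ := hδ
  match δ, h0 with
  | .oadd e1 c1 a1, _ =>
    refine ⟨oadd_ne_zero' _ _ _, ?_⟩
    rcases h with ⟨hs, rfl⟩ | ⟨hs, j, hj, rfl⟩
    · exact Or.inl ⟨by simpa [isSuccO] using hs, by rw [predO]⟩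
    · exact Or.inr ⟨by simpa [isSuccO] using hs, j, hj, by rw [fsO]⟩

theorem chainO_oadd_tail {e : ONote} {c : ℕ+} {δ δ' : ONote}
    (h : Relation.ReflTransGen StepO δ δ') :
    Relation.ReflTransGen StepO (.oadd e c δ) (.oadd e c δ') :=
  Relation.ReflTransGen.lift (fun x => ONote.oadd e c x) (fun _ _ s => stepO_oadd_tail s) _ _ h

theorem tchainO_oadd_tail {e : ONote} {c : ℕ+} {δ δ' : ONote}
    (h : Relation.TransGen StepO δ δ') :
    Relation.TransGen StepO (.oadd e c δ) (.oadd e c δ') :=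
  Relation.TransGen.lift (fun x => ONote.oadd e c x) (fun _ _ s => stepO_oadd_tail s) _ _ h

theorem stepO_exp {δ δ' : ONote} (hδ : StepO δ δ') :
    StepO (.oadd δ 1 .zero) (.oadd δ' 1 .zero) := by
  obtain ⟨h0, h⟩ := hδ
  refine ⟨oadd_ne_zero' _ _ _, Or.inr ⟨by simp [isSuccO, h0], ?_⟩⟩
  rcases h with ⟨hs, rfl⟩ | ⟨hs, j, hj, rfl⟩
  · exact ⟨1, le_rfl, by rw [fsO]; simp [h0, hs]⟩
  · exact ⟨j, hj, by rw [fsO]; simp [h0, hs]⟩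

theorem tchainO_exp {δ δ' : ONote} (h : Relation.TransGen StepO δ δ') :
    Relation.TransGen StepO (.oadd δ 1 .zero) (.oadd δ' 1 .zero) :=
  Relation.TransGen.lift (fun x => ONote.oadd x 1 ONote.zero) (fun _ _ s => stepO_exp s) _ _ h
def tO (e : ONote) (k : ℕ) : ONote :=
  if e = ONote.zero then .zero
  else if isSuccO e then
    (if h : k = 0 then .zero else .oadd (predO e) ⟨k, Nat.pos_of_ne_zero h⟩ .zero)
  else .oadd (fsO e k) 1 .zero

theorem fsO_oadd_zero (e : ONote) (c : ℕ+) (k : ℕ) :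
    fsO (.oadd e c .zero) k = if c = 1 then tO e k else .oadd e (c - 1) (tO e k) := by
  rw [fsO]; rfl

theorem pnat_sub_one_mk (c : ℕ+) (j : ℕ) (hc : (c : ℕ) = j + 2) (h2 : 0 < j + 1) :
    c - 1 = (⟨j + 1, h2⟩ : ℕ+) := by
  apply PNat.coe_injective
  rw [PNat.sub_coe, if_pos]
  · show (c : ℕ) - 1 = j + 1
    omega
  · rw [← PNat.coe_lt_coe, PNat.one_coe, hc]
    omega

theorem fsO_succ_chain : ∀ (α : ONote), α.NF → α ≠ 0 → isSuccO α = false →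
    ∀ j : ℕ, Relation.TransGen StepO (fsO α (j + 1)) (fsO α j)
  | .zero, _, h0, _ => absurd rfl h0
  | .oadd e c (.oadd e' c' a'), h, _, hs => fun j => by
    rw [fsO, fsO]
    exact tchainO_oadd_tail (fsO_succ_chain (.oadd e' c' a') ⟨_, h.snd'⟩
      (oadd_ne_zero' _ _ _) (by simpa [isSuccO] using hs) j)
  | .oadd e c .zero, h, _, hs => fun j => by
    have he : e ≠ 0 := by
      intro hh; rw [isSuccO, decide_eq_false_iff_not] at hs; exact hs hh
    have he' : ¬ e = ONote.zero := fun hh => he (hh.trans ONote.zero_def)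
    have hnfe : e.NF := h.fst
    have core : Relation.TransGen StepO (tO e (j + 1)) (tO e j) := by
      have h1 : tO e (j + 1) = if isSuccO e
          then .oadd (predO e) ⟨j + 1, Nat.succ_pos j⟩ .zero
          else .oadd (fsO e (j + 1)) 1 .zero := by
        simp [tO, he, he']
      cases hse : isSuccO e with
      | false =>
        rw [hse, if_neg (by simp)] at h1
        have h2 : tO e j = .oadd (fsO e j) 1 .zero := by simp [tO, he, he', hse]
        rw [h1, h2]
        exact tchainO_exp (fsO_succ_chain e hnfe he hse j)
      | true =>
        rw [hse, if_pos rfl] at h1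
        by_cases hpe : predO e = 0
        · -- one predecessor step
          apply Relation.TransGen.single
          refine ⟨h1 ▸ oadd_ne_zero' _ _ _, Or.inl ⟨?_, ?_⟩⟩
          · rw [h1, hpe]; simp [isSuccO]
          · rw [h1, hpe]; erw [predO, if_pos ONote.zero_def.symm]
            cases j with
            | zero =>
              show tO e 0 = ONote.ofNat 0
              simp [tO, hse]
            | succ m =>
              show tO e (m + 1) = ONote.ofNat (m + 1)
              rw [show tO e (m + 1) = ONote.oadd (predO e) ⟨m + 1, Nat.succ_pos m⟩ .zero from
                by simp [tO, he, he', hse], hpe]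
              rfl
        · have hpe' : ¬ predO e = ONote.zero := fun hh => hpe (hh.trans ONote.zero_def)
          have hstep : StepO (tO e (j + 1))
              (fsO (.oadd (predO e) ⟨j + 1, Nat.succ_pos j⟩ .zero) 0) := by
            refine ⟨h1 ▸ oadd_ne_zero' _ _ _, Or.inr ⟨?_, 0, Nat.zero_le _, by rw [h1]⟩⟩
            rw [h1]; simp [isSuccO, hpe, hpe']
          erw [fsO_oadd_zero] at hstep
          cases hspe : isSuccO (predO e) with
          | true =>
            have ht0 : tO (predO e) 0 = .zero := by simp [tO, hpe, hpe', hspe]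
            cases j with
            | zero =>
              erw [if_pos (show (⟨0 + 1, Nat.succ_pos 0⟩ : ℕ+) = 1 from rfl), ht0] at hstep
              rw [show tO e 0 = ONote.zero from by simp [tO, hse]]
              exact Relation.TransGen.single hstep
            | succ m =>
              rw [if_neg (fun hh => by simpa using congrArg (PNat.val) hh),
                pnat_sub_one_mk ⟨m + 1 + 1, Nat.succ_pos _⟩ m rfl (Nat.succ_pos m), ht0] at hstep
              rw [show tO e (m + 1) = ONote.oadd (predO e) ⟨m + 1, Nat.succ_pos m⟩ .zero from
                by simp [tO, he, he', hse]]
              exact Relation.TransGen.single hstep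
          | false =>
            have ht0 : tO (predO e) 0 = .oadd (fsO (predO e) 0) 1 .zero := by
              simp [tO, hpe, hpe', hspe]
            have hnft : (tO (predO e) 0).NF := by
              rw [ht0]
              exact ONote.NF.oadd (fsO_nf (predO_nf hnfe) 0) 1 ONote.NFBelow.zero
            have hchain0 : Relation.ReflTransGen StepO (tO (predO e) 0) 0 :=
              chain_to_zero _ hnft
            cases j with
            | zero =>
              erw [if_pos (show (⟨0 + 1, Nat.succ_pos 0⟩ : ℕ+) = 1 from rfl)] at hstep
              rw [show tO e 0 = (0 : ONote) from by simp [tO, hse, ONote.zero_def]]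
              exact Relation.TransGen.head' hstep hchain0
            | succ m =>
              rw [if_neg (fun hh => by simpa using congrArg (PNat.val) hh),
                pnat_sub_one_mk ⟨m + 1 + 1, Nat.succ_pos _⟩ m rfl (Nat.succ_pos m)] at hstep
              rw [show tO e (m + 1) = ONote.oadd (predO e) ⟨m + 1, Nat.succ_pos m⟩ .zero from
                by simp [tO, he, he', hse]]
              exact Relation.TransGen.head' hstep (chainO_oadd_tail hchain0)
    rw [fsO_oadd_zero, fsO_oadd_zero]
    split
    · exact core
    · exact tchainO_oadd_tail core

theorem fsO_chain_lt {α : ONote} (h : α.NF) (h0 : α ≠ 0) (hs : isSuccO α = false)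
    {j m : ℕ} (hjm : j < m) : Relation.TransGen StepO (fsO α m) (fsO α j) := by
  induction m with
  | zero => omega
  | succ m IH =>
    rcases Nat.lt_succ_iff_lt_or_eq.mp hjm with hlt | rfl
    · exact (fsO_succ_chain α h h0 hs m).trans (IH hlt)
    · exact fsO_succ_chain α h h0 hs j

theorem fsO_chain_le {α : ONote} (h : α.NF) (h0 : α ≠ 0) (hs : isSuccO α = false)
    {j m : ℕ} (hjm : j ≤ m) : Relation.ReflTransGen StepO (fsO α m) (fsO α j) := by
  rcases eq_or_lt_of_le hjm with rfl | hlt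
  · exact Relation.ReflTransGen.refl
  · exact (fsO_chain_lt h h0 hs hlt).to_reflTransGen
def Hfun : {o : ONote // o.NF} → ℕ → ℕ
  | ⟨o, h⟩, n =>
    if h0 : o = 0 then n
    else if hs : isSuccO o then Hfun ⟨predO o, predO_nf h⟩ (n + 1)
    else Hfun ⟨fsO o n, fsO_nf h n⟩ (n + 1)
  termination_by o _ => o.1.repr
  decreasing_by
  · exact repr_predO_lt h hs
  · exact repr_fsO_lt n h h0

def Mfun : {o : ONote // o.NF} → ℕ → ℕ
  | ⟨o, h⟩, n =>
    if h0 : o = 0 then n ^ n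
    else if hs : isSuccO o then (fun x => Mfun ⟨predO o, predO_nf h⟩ x)^[n] n
    else Mfun ⟨fsO o n, fsO_nf h n⟩ n
  termination_by o _ => o.1.repr
  decreasing_by
  · exact repr_predO_lt h hs
  · exact repr_fsO_lt n h h0

theorem Hfun_zero (h : (0 : ONote).NF) (n : ℕ) : Hfun ⟨0, h⟩ n = n := by
  rw [Hfun]; simp

theorem Hfun_succ {o : ONote} (h : o.NF) (h0 : o ≠ 0) (hs : isSuccO o = true) (n : ℕ) :
    Hfun ⟨o, h⟩ n = Hfun ⟨predO o, predO_nf h⟩ (n + 1) := by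
  rw [Hfun]; simp [h0, hs]

theorem Hfun_limit {o : ONote} (h : o.NF) (h0 : o ≠ 0) (hs : isSuccO o = false) (n : ℕ) :
    Hfun ⟨o, h⟩ n = Hfun ⟨fsO o n, fsO_nf h n⟩ (n + 1) := by
  rw [Hfun]; simp [h0, hs]

theorem Mfun_zero (h : (0 : ONote).NF) (n : ℕ) : Mfun ⟨0, h⟩ n = n ^ n := by
  rw [Mfun]; simp

theorem Mfun_succ {o : ONote} (h : o.NF) (h0 : o ≠ 0) (hs : isSuccO o = true) (n : ℕ) :
    Mfun ⟨o, h⟩ n = (fun x => Mfun ⟨predO o, predO_nf h⟩ x)^[n] n := by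
  rw [Mfun]; simp [h0, hs]

theorem Mfun_limit {o : ONote} (h : o.NF) (h0 : o ≠ 0) (hs : isSuccO o = false) (n : ℕ) :
    Mfun ⟨o, h⟩ n = Mfun ⟨fsO o n, fsO_nf h n⟩ n := by
  rw [Mfun]; simp [h0, hs]
theorem predO_add_one : ∀ {o : ONote}, o.NF → isSuccO o = true → predO o + 1 = o
  | .oadd e c .zero, h, hs => by
    have he : e = 0 := by simpa [isSuccO] using hs
    subst he
    have hp : predO (ONote.oadd 0 c ONote.zero) = ONote.ofNat ((c : ℕ) - 1) := by
      rw [predO, if_pos ONote.zero_def.symm]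
    rw [hp]
    cases hcc : (c : ℕ) with
    | zero => exact absurd hcc c.ne_zero
    | succ m =>
      rw [Nat.add_sub_cancel]
      cases m with
      | zero =>
        have : c = 1 := PNat.coe_eq_one_iff.mp hcc
        subst this
        rfl
      | succ m' =>
        have hc : (m'.succPNat + 1 : ℕ+) = c := by
          apply PNat.coe_injective
          rw [hcc]
          rfl
        rw [← hc]
        rfl
  | .oadd e c (.oadd e' c' a'), h, hs => by
    have hs' : isSuccO (ONote.oadd e' c' a') = true := by simpa [isSuccO] using hs
    have hih : predO (ONote.oadd e' c' a') + 1 = ONote.oadd e' c' a' :=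
      predO_add_one h.snd hs'
    rw [predO, ONote.oadd_add, hih]
    haveI := h.fst
    haveI := h.snd.fst
    have hlt : ONote.repr e' < ONote.repr e := h.snd'.lt
    cases hcmp : ONote.cmp e e' with
    | lt =>
      have := ONote.cmp_compares e e'
      rw [hcmp] at this
      exact absurd (ONote.lt_def.mp this) (asymm hlt)
    | eq =>
      have := ONote.cmp_compares e e'
      rw [hcmp] at this
      rw [this] at hlt
      exact absurd hlt (lt_irrefl _)
    | gt => simp [ONote.addAux, hcmp]

theorem hardyRel_Hfun : ∀ o : ONote, o.NF → ∀ (h : o.NF) (n : ℕ),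
    HardyRel o n (Hfun ⟨o, h⟩ n) := by
  refine nf_repr_ind (fun o ho IH => ?_)
  intro h n
  by_cases h0 : o = 0
  · subst h0; rw [Hfun_zero]; exact HardyRel.zero n
  · cases hs : isSuccO o with
    | true =>
      rw [Hfun_succ h h0 hs]
      have := HardyRel.succ (predO o) n _
        (IH _ (predO_nf h) (repr_predO_lt h hs) (predO_nf h) (n + 1))
      rwa [predO_add_one h hs] at this
    | false =>
      rw [Hfun_limit h h0 hs]
      exact HardyRel.limit o n _ (isLimit_repr h h0 hs)
        (IH _ (fsO_nf h n) (repr_fsO_lt n h h0) (fsO_nf h n) (n + 1))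

theorem mIter_iterate (q : ONote) (g : ℕ → ℕ) (hg : ∀ x, MRel q x (g x)) :
    ∀ k x, MIter q k x (g^[k] x) := by
  intro k
  induction k with
  | zero => exact fun x => MIter.base q x
  | succ k IHk =>
    intro x
    rw [Function.iterate_succ_apply']
    exact MIter.step q k x _ _ (IHk x) (hg _)

theorem mRel_Mfun : ∀ o : ONote, o.NF → ∀ (h : o.NF) (n : ℕ),
    MRel o n (Mfun ⟨o, h⟩ n) := by
  refine nf_repr_ind (fun o ho IH => ?_)
  intro h n
  by_cases h0 : o = 0
  · subst h0; rw [Mfun_zero]; exact MRel.zero n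
  · cases hs : isSuccO o with
    | true =>
      rw [Mfun_succ h h0 hs]
      have := MRel.succ (predO o) n _
        (mIter_iterate (predO o) _
          (IH _ (predO_nf h) (repr_predO_lt h hs) (predO_nf h)) n n)
      rwa [predO_add_one h hs] at this
    | false =>
      rw [Mfun_limit h h0 hs]
      exact MRel.limit o n _ (isLimit_repr h h0 hs)
        (IH _ (fsO_nf h n) (repr_fsO_lt n h h0) (fsO_nf h n) n)
theorem Hfun_pack : ∀ α : ONote, α.NF → ∀ (h : α.NF),
    (∀ n, Hfun ⟨α, h⟩ n ≤ Hfun ⟨α, h⟩ (n + 1)) ∧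
    (∀ β (hβ : β.NF), Relation.ReflTransGen StepO α β → ∀ n, 1 ≤ n →
      Hfun ⟨β, hβ⟩ n ≤ Hfun ⟨α, h⟩ n) := by
  refine nf_repr_ind (fun α hα IH => ?_)
  intro h
  constructor
  · intro n
    by_cases h0 : α = 0
    · subst h0; rw [Hfun_zero, Hfun_zero]; omega
    · cases hs : isSuccO α with
      | true =>
        rw [Hfun_succ h h0 hs, Hfun_succ h h0 hs]
        exact (IH _ (predO_nf h) (repr_predO_lt h hs) _).1 (n + 1)
      | false =>
        rw [Hfun_limit h h0 hs, Hfun_limit h h0 hs]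
        have hch := fsO_chain_le h h0 hs (Nat.le_succ n)
        calc Hfun ⟨fsO α n, fsO_nf h n⟩ (n + 1)
            ≤ Hfun ⟨fsO α (n + 1), fsO_nf h (n + 1)⟩ (n + 1) :=
              (IH _ (fsO_nf h (n + 1)) (repr_fsO_lt _ h h0) _).2 _ (fsO_nf h n) hch
                (n + 1) (by omega)
        _ ≤ Hfun ⟨fsO α (n + 1), fsO_nf h (n + 1)⟩ (n + 1 + 1) :=
              (IH _ (fsO_nf h (n + 1)) (repr_fsO_lt _ h h0) _).1 (n + 1)
  · intro β hβ hchain n hn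
    rcases Relation.ReflTransGen.cases_head hchain with rfl | ⟨γ, hstep, hrest⟩
    · exact le_rfl
    · have hγnf : γ.NF := hstep.nf h
      have hγlt := hstep.repr_lt h
      have hrest' : Hfun ⟨β, hβ⟩ n ≤ Hfun ⟨γ, hγnf⟩ n :=
        (IH _ hγnf hγlt _).2 _ hβ hrest n hn
      obtain ⟨h0, hd⟩ := hstep
      rcases hd with ⟨hs, rfl⟩ | ⟨hs, j, hj, rfl⟩
      · calc Hfun ⟨β, hβ⟩ n ≤ Hfun ⟨predO α, hγnf⟩ n := hrest'
        _ ≤ Hfun ⟨predO α, hγnf⟩ (n + 1) := (IH _ hγnf hγlt _).1 n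
        _ = Hfun ⟨α, h⟩ n := (Hfun_succ h h0 hs n).symm
      · have hchain2 := fsO_chain_le h h0 hs (le_trans hj hn)
        calc Hfun ⟨β, hβ⟩ n ≤ Hfun ⟨fsO α j, hγnf⟩ n := hrest'
        _ ≤ Hfun ⟨fsO α n, fsO_nf h n⟩ n :=
            (IH _ (fsO_nf h n) (repr_fsO_lt _ h h0) _).2 _ hγnf hchain2 n hn
        _ ≤ Hfun ⟨fsO α n, fsO_nf h n⟩ (n + 1) :=
            (IH _ (fsO_nf h n) (repr_fsO_lt _ h h0) _).1 n
        _ = Hfun ⟨α, h⟩ n := (Hfun_limit h h0 hs n).symm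

theorem Hfun_mono {α : ONote} (h : α.NF) {n m : ℕ} (hnm : n ≤ m) :
    Hfun ⟨α, h⟩ n ≤ Hfun ⟨α, h⟩ m := by
  induction m with
  | zero => simpa [Nat.le_zero.mp hnm]
  | succ m IHm =>
    rcases Nat.lt_succ_iff_lt_or_eq.mp (Nat.lt_succ_of_le hnm) with hlt | rfl
    · exact (IHm (by omega)).trans ((Hfun_pack α h h).1 m)
    · exact le_rfl

theorem Hfun_chain {α β : ONote} (h : α.NF) (hβ : β.NF)
    (c : Relation.ReflTransGen StepO α β) {n : ℕ} (hn : 1 ≤ n) :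
    Hfun ⟨β, hβ⟩ n ≤ Hfun ⟨α, h⟩ n :=
  (Hfun_pack α h h).2 β hβ c n hn

theorem Hfun_step {α β : ONote} (h : α.NF) (hs : StepO α β) (hβ : β.NF) {n : ℕ}
    (hn : 1 ≤ n) : Hfun ⟨β, hβ⟩ (n + 1) ≤ Hfun ⟨α, h⟩ n := by
  obtain ⟨h0, hd⟩ := hs
  rcases hd with ⟨hs', rfl⟩ | ⟨hs', j, hj, rfl⟩
  · rw [Hfun_succ h h0 hs']
  · rw [Hfun_limit h h0 hs']
    exact Hfun_chain (fsO_nf h n) hβ (fsO_chain_le h h0 hs' (hj.trans hn)) (by omega)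

theorem Hfun_cross {α : ONote} (h : α.NF) (h0 : α ≠ 0) (hs : isSuccO α = false)
    {n x : ℕ} (hn : 1 ≤ n) (hnx : n < x) :
    Hfun ⟨fsO α n, fsO_nf h n⟩ (n + 1) ≤ Hfun ⟨fsO α x, fsO_nf h x⟩ (x - 1) := by
  have hx2 : 2 ≤ x := by omega
  obtain ⟨γ, hstep, hrest⟩ := Relation.TransGen.head'_iff.mp (fsO_chain_lt h h0 hs hnx)
  have hγ : γ.NF := hstep.nf (fsO_nf h x)
  have hlast : Hfun ⟨γ, hγ⟩ (x - 1 + 1) ≤ Hfun ⟨fsO α x, fsO_nf h x⟩ (x - 1) :=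
    Hfun_step (fsO_nf h x) hstep hγ (by omega)
  rw [Nat.sub_add_cancel (by omega)] at hlast
  calc Hfun ⟨fsO α n, fsO_nf h n⟩ (n + 1) ≤ Hfun ⟨fsO α n, fsO_nf h n⟩ x :=
        Hfun_mono _ (by omega)
  _ ≤ Hfun ⟨γ, hγ⟩ x := Hfun_chain hγ _ hrest (by omega)
  _ ≤ Hfun ⟨fsO α x, fsO_nf h x⟩ (x - 1) := hlast
theorem Mfun_growth : ∀ α : ONote, α.NF → ∀ (h : α.NF) (x : ℕ), 2 ≤ x →
    x + 1 ≤ Mfun ⟨α, h⟩ x := by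
  refine nf_repr_ind (fun α hα IH => ?_)
  intro h x hx
  by_cases h0 : α = 0
  · subst h0
    rw [Mfun_zero]
    calc x + 1 ≤ 2 * x := by omega
    _ ≤ x * x := Nat.mul_le_mul_right x hx
    _ = x ^ 2 := (sq x).symm
    _ ≤ x ^ x := Nat.pow_le_pow_right (by omega) hx
  · cases hs : isSuccO α with
    | true =>
      rw [Mfun_succ h h0 hs]
      have key : ∀ k, x + k ≤ (fun z => Mfun ⟨predO α, predO_nf h⟩ z)^[k] x := by
        intro k
        induction k with
        | zero => simp
        | succ k IHk =>
          rw [Function.iterate_succ_apply']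
          have h2 : 2 ≤ (fun z => Mfun ⟨predO α, predO_nf h⟩ z)^[k] x := by omega
          have := IH _ (predO_nf h) (repr_predO_lt h hs) (predO_nf h) _ h2
          omega
      have := key x
      omega
    | false =>
      rw [Mfun_limit h h0 hs]
      exact IH _ (fsO_nf h x) (repr_fsO_lt _ h h0) _ x hx

theorem Mfun_iter_lb {β : ONote} (hβ : β.NF) (k x : ℕ) (hx : 2 ≤ x) :
    x + k ≤ (fun z => Mfun ⟨β, hβ⟩ z)^[k] x := by
  induction k with
  | zero => simp
  | succ k IHk =>
    rw [Function.iterate_succ_apply']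
    have h2 : 2 ≤ (fun z => Mfun ⟨β, hβ⟩ z)^[k] x := by omega
    have := Mfun_growth β hβ hβ _ h2
    omega

theorem Hfun_le_Mfun : ∀ α : ONote, α.NF → ∀ (h : α.NF) (n x : ℕ), 1 ≤ n → n + 1 ≤ x →
    Hfun ⟨α, h⟩ n ≤ Mfun ⟨α, h⟩ x := by
  refine nf_repr_ind (fun α hα IH => ?_)
  intro h n x hn hx
  by_cases h0 : α = 0
  · subst h0
    rw [Hfun_zero, Mfun_zero]
    calc n ≤ x := by omega
    _ ≤ x ^ x := Nat.le_self_pow (by omega) x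
  · cases hs : isSuccO α with
    | true =>
      rw [Hfun_succ h h0 hs, Mfun_succ h h0 hs]
      obtain ⟨x', rfl⟩ : ∃ x', x = x' + 1 := ⟨x - 1, by omega⟩
      rw [Function.iterate_succ_apply']
      set y := (fun z => Mfun ⟨predO α, predO_nf h⟩ z)^[x'] (x' + 1) with hy
      have hyge : x' + 1 + x' ≤ y := Mfun_iter_lb (predO_nf h) x' (x' + 1) (by omega)
      exact IH _ (predO_nf h) (repr_predO_lt h hs) (predO_nf h) (n + 1) y (by omega)
        (by omega)
    | false =>
      rw [Hfun_limit h h0 hs, Mfun_limit h h0 hs]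
      calc Hfun ⟨fsO α n, fsO_nf h n⟩ (n + 1)
          ≤ Hfun ⟨fsO α x, fsO_nf h x⟩ (x - 1) := Hfun_cross h h0 hs hn (by omega)
      _ ≤ Mfun ⟨fsO α x, fsO_nf h x⟩ x :=
          IH _ (fsO_nf h x) (repr_fsO_lt _ h h0) (fsO_nf h x) (x - 1) x (by omega) (by omega)

/-- For all `α < ε₀` and all `n ≥ 1`, `m(α, n+1) ≥ H_α(n)`. -/
theorem m_ge_Hardy :
    ∀ o : ONote, o.NF → ∀ n : ℕ, 1 ≤ n →
      ∃ a b : ℕ, MRel o (n + 1) a ∧ HardyRel o n b ∧ b ≤ a := by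
  intro o h n hn
  exact ⟨Mfun ⟨o, h⟩ (n + 1), Hfun ⟨o, h⟩ n, mRel_Mfun o h h (n + 1),
    hardyRel_Hfun o h h n, Hfun_le_Mfun o h h n (n + 1) hn le_rfl⟩
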